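/- arXiv:1405.3587 — 3 statements merged into one kernel-verified Lean document; each statement's English description precedes it below -/
import Mathlib

section
/- As x → ∞, ∑_{n ≤ x} ω(s(n)) = #{(n, p) : 1 ≤ n ≤ x, p prime, log₂ x < p ≤ x^{1/√(log₂ x)}, p divides s(n)} + o(x log₂ x); that is, the absolute difference between the two quantities, divided by x log₂ x, tends to 0. -/
open Classical Finset

/-- Sum of the divisors of `n` (with `σ(0) = 0`). -/
def sigmaFn (n : ℕ) : ℕ := ∑ d ∈ n.divisors, d

/-- Sum of the proper divisors of `n`. -/
def s (n : ℕ) : ℕ := sigmaFn n - n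

/-- The number of distinct prime factors, with `ω(0) = ω(1) = 0`. -/
def omegaFn (n : ℕ) : ℕ := n.primeFactors.card

/-- The number of prime factors counted with multiplicity, `Ω(0) = Ω(1) = 0`. -/
def bigOmegaFn (n : ℕ) : ℕ := n.primeFactorsList.length

/-- `log₁ x = max 1 (log x)`. -/
noncomputable def log1 (x : ℝ) : ℝ := max 1 (Real.log x)
noncomputable def log2 (x : ℝ) : ℝ := log1 (log1 x)
noncomputable def log3 (x : ℝ) : ℝ := log1 (log2 x)
noncomputable def log4 (x : ℝ) : ℝ := log1 (log3 x)

/-- The largest prime factor of `n`, with `P(1) = 1`. -/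
def P (n : ℕ) : ℕ := max 1 (n.primeFactors.sup id)

/-- The second-largest prime factor of `n` (with multiplicity), `P₂(1) = 1`,
`P₂(p) = 1` for `p` prime. -/
def P2 (n : ℕ) : ℕ := P (n / P n)

/-- The conjunction of conditions A–F; `n ∈ E(x)` iff one of them fails. -/
def EProp (x : ℝ) (n : ℕ) : Prop :=
  (P n : ℝ) > x ^ (1 / log3 x) ∧
  ¬ (P n) ^ 2 ∣ n ∧
  (P2 n : ℝ) > x ^ (1 / log3 x) ∧
  (P2 n : ℝ) < x * (P n : ℝ) / (2 * (n : ℝ)) ∧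
  ¬ (P2 n) ^ 2 ∣ n ∧
  ∀ q : ℕ, q.Prime → q ∣ Nat.gcd (n / P n) (sigmaFn (n / P n)) → (q : ℝ) < log2 x

/-- The exceptional set `E(x)`. -/
noncomputable def E (x : ℝ) : Finset ℕ :=
  (Finset.Icc 1 ⌊x⌋₊).filter fun n => ¬ EProp x n

/-!
Every prime factor `p` of `s(n) ≤ n² ≤ x²` (for `2 ≤ n ≤ x`) is either counted on the right,
or satisfies `p ≤ log₂ x`, or `p > x^{1/√(log₂ x)}`. There are at most `π(log₂ x) = o(log₂ x)`
primes of the second kind, and at most `2 √(log₂ x)` of the third, since their product divides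
`s(n) ≤ x²`. Hence each `n ≥ 2` contributes `o(log₂ x)` to the difference, while `n = 1`
contributes at most `x^{1/√(log₂ x)} ≤ √x`.
-/

open Filter Asymptotics Real
open Nat (primeCounting)

lemma s_eq_sum_properDivisors (n : ℕ) : s n = ∑ d ∈ n.properDivisors, d := by
  rw [s, sigmaFn, Nat.sum_divisors_eq_sum_properDivisors_add_self, Nat.add_sub_cancel]

lemma s_one : s 1 = 0 := by simp [s_eq_sum_properDivisors]

lemma s_ne_zero {n : ℕ} (hn : 2 ≤ n) : s n ≠ 0 := by
  rw [s_eq_sum_properDivisors]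
  exact (Nat.one_pos.trans_le (single_le_sum (f := fun d => d) (fun _ _ => Nat.zero_le _)
    (Nat.one_mem_properDivisors_iff_one_lt.2 hn))).ne'

lemma s_le_sq (n : ℕ) : s n ≤ n ^ 2 := by
  rw [s_eq_sum_properDivisors, sq]
  calc ∑ d ∈ n.properDivisors, d ≤ ∑ _d ∈ n.properDivisors, n :=
        sum_le_sum fun d hd => (Nat.mem_properDivisors.1 hd).2.le
    _ = #n.properDivisors * n := by rw [sum_const, smul_eq_mul]
    _ ≤ n * n := Nat.mul_le_mul_right n
        ((card_le_card Nat.properDivisors_subset_divisors).trans (Nat.card_divisors_le_self n))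

lemma card_primeFactors_filter_le_primeCounting (m : ℕ) (L : ℝ) :
    #(m.primeFactors.filter fun p : ℕ => (p : ℝ) ≤ L) ≤ primeCounting ⌊L⌋₊ := by
  rw [← Nat.primesLE_card_eq_primeCounting]
  refine card_le_card fun p hp => ?_
  rw [mem_filter] at hp
  exact Nat.mem_primesLE.2 ⟨Nat.le_floor hp.2, Nat.prime_of_mem_primeFactors hp.1⟩

lemma mul_card_primeFactors_filter_rpow_lt_le {m : ℕ} {x a b : ℝ} (hm : m ≠ 0) (hx : 1 < x)
    (hmx : (m : ℝ) ≤ x ^ b) :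
    a * #(m.primeFactors.filter fun p : ℕ => x ^ a < (p : ℝ)) ≤ b := by
  set F := m.primeFactors.filter fun p : ℕ => x ^ a < (p : ℝ)
  have hF : ∏ p ∈ F, p ≤ m := Nat.le_of_dvd (Nat.pos_of_ne_zero hm)
    ((prod_dvd_prod_of_subset _ _ id (filter_subset _ _)).trans (Nat.prod_primeFactors_dvd m))
  have hprod : (x ^ a) ^ #F ≤ m :=
    calc (x ^ a) ^ #F = ∏ _p ∈ F, x ^ a := (prod_const _).symm
      _ ≤ ∏ p ∈ F, (p : ℝ) :=
        prod_le_prod (fun _ _ => by positivity) fun p hp => (mem_filter.1 hp).2.le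
      _ ≤ m := by rw [← Nat.cast_prod]; exact_mod_cast hF
  rw [← Real.rpow_natCast, ← Real.rpow_mul (by positivity)] at hprod
  exact (Real.rpow_le_rpow_left_iff hx).1 (hprod.trans hmx)

lemma card_primeFactors_le (m : ℕ) (L X : ℝ) :
    #m.primeFactors ≤ #(m.primeFactors.filter fun p : ℕ => L < (p : ℝ) ∧ (p : ℝ) ≤ X)
      + primeCounting ⌊L⌋₊ + #(m.primeFactors.filter fun p : ℕ => X < (p : ℝ)) := by
  have hcover : m.primeFactors ⊆ (m.primeFactors.filter fun p : ℕ => L < (p : ℝ) ∧ (p : ℝ) ≤ X)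
      ∪ (m.primeFactors.filter fun p : ℕ => (p : ℝ) ≤ L)
      ∪ (m.primeFactors.filter fun p : ℕ => X < (p : ℝ)) := by
    intro p hp
    simp only [mem_union, mem_filter]
    by_cases hL : (p : ℝ) ≤ L <;> by_cases hX : (p : ℝ) ≤ X <;> grind
  grw [card_le_card hcover, card_union_le, card_union_le,
    card_primeFactors_filter_le_primeCounting]

lemma filter_Icc_floor_eq_filter_primeFactors {m : ℕ} (hm : m ≠ 0) (L X : ℝ) :
    ((Icc 1 ⌊X⌋₊).filter fun p : ℕ => p.Prime ∧ L < (p : ℝ) ∧ (p : ℝ) ≤ X ∧ p ∣ m)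
      = m.primeFactors.filter fun p : ℕ => L < (p : ℝ) ∧ (p : ℝ) ≤ X := by
  ext p
  simp only [mem_filter, mem_Icc, Nat.mem_primeFactors]
  constructor
  · rintro ⟨-, hp, hL, hX, hdvd⟩
    exact ⟨⟨hp, hdvd, hm⟩, hL, hX⟩
  · rintro ⟨⟨hp, hdvd, -⟩, hL, hX⟩
    exact ⟨⟨hp.one_le, Nat.le_floor hX⟩, hp, hL, hX, hdvd⟩

lemma abs_omegaFn_sub_card_le {m : ℕ} {x L : ℝ} (hm : m ≠ 0) (hx : 1 < x) (hL : 0 < L)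
    (hmx : (m : ℝ) ≤ x ^ 2) :
    |(omegaFn m : ℝ) - #((Icc 1 ⌊x ^ (1 / √L)⌋₊).filter fun p : ℕ =>
        p.Prime ∧ L < (p : ℝ) ∧ (p : ℝ) ≤ x ^ (1 / √L) ∧ p ∣ m)|
      ≤ primeCounting ⌊L⌋₊ + 2 * √L := by
  rw [filter_Icc_floor_eq_filter_primeFactors hm, omegaFn, abs_sub_le_iff]
  have hsplit := (Nat.cast_le (α := ℝ)).2 (card_primeFactors_le m L (x ^ (1 / √L)))
  have hmiddle := (Nat.cast_le (α := ℝ)).2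
    (card_filter_le m.primeFactors fun p : ℕ => L < (p : ℝ) ∧ (p : ℝ) ≤ x ^ (1 / √L))
  push_cast at hsplit
  have hlarge := mul_card_primeFactors_filter_rpow_lt_le (a := 1 / √L) hm hx
    (by rwa [Real.rpow_two])
  rw [one_div_mul_eq_div, div_le_iff₀ (by positivity)] at hlarge
  have : (0 : ℝ) ≤ primeCounting ⌊L⌋₊ + 2 * √L := by positivity
  constructor <;> linarith

lemma card_filter_product_eq_sum {α β : Type*} (A : Finset α) (B : Finset β)
    (P : α × β → Prop) [DecidablePred P] :
    #((A ×ˢ B).filter P) = ∑ a ∈ A, #(B.filter fun b => P (a, b)) := by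
  simp only [card_filter, sum_product]

theorem abs_sum_omegaFn_s_sub_card_le {x L : ℝ} (hx : 1 < x) (hL : 0 < L) :
    |(∑ n ∈ Icc 1 ⌊x⌋₊, (omegaFn (s n) : ℝ)) -
      (#((Icc 1 ⌊x⌋₊ ×ˢ Icc 1 ⌊x ^ (1 / √L)⌋₊).filter fun np =>
        np.2.Prime ∧ L < (np.2 : ℝ) ∧ (np.2 : ℝ) ≤ x ^ (1 / √L) ∧ np.2 ∣ s np.1) : ℝ)|
      ≤ x ^ (1 / √L) + x * (primeCounting ⌊L⌋₊ + 2 * √L) := by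
  set X := x ^ (1 / √L)
  set c : ℕ → ℕ := fun m => #((Icc 1 ⌊X⌋₊).filter fun p : ℕ =>
    p.Prime ∧ L < (p : ℝ) ∧ (p : ℝ) ≤ X ∧ p ∣ m)
  -- `s 1 = 0` is divisible by every prime, so `n = 1` contributes all primes in `(L, X]`.
  have hone : |(omegaFn (s 1) : ℝ) - c (s 1)| ≤ X := by
    have : c (s 1) ≤ ⌊X⌋₊ := (card_le_card (filter_subset _ _)).trans (by simp)
    rw [s_one, omegaFn, Nat.primeFactors_zero, card_empty, Nat.cast_zero, zero_sub, abs_neg,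
      Nat.abs_cast]
    exact (Nat.cast_le.2 this).trans (Nat.floor_le (by positivity))
  have hrest : ∀ n ∈ Icc 2 ⌊x⌋₊, |(omegaFn (s n) : ℝ) - c (s n)|
      ≤ primeCounting ⌊L⌋₊ + 2 * √L := by
    intro n hn
    rw [mem_Icc] at hn
    refine abs_omegaFn_sub_card_le (s_ne_zero hn.1) hx hL ?_
    have hnx : (n : ℝ) ≤ x := (Nat.cast_le.2 hn.2).trans (Nat.floor_le (by positivity))
    calc (s n : ℝ) ≤ (n : ℝ) ^ 2 := by exact_mod_cast s_le_sq n
      _ ≤ x ^ 2 := by gcongr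
  have hcard : (#(Icc 2 ⌊x⌋₊) : ℝ) ≤ x := by
    rw [Nat.card_Icc]
    exact (Nat.cast_le.2 (by omega)).trans (Nat.floor_le (by positivity))
  rw [card_filter_product_eq_sum, Nat.cast_sum, ← sum_sub_distrib,
    ← insert_Icc_add_one_left_eq_Icc (Nat.one_le_floor_iff x |>.2 hx.le), sum_insert (by simp)]
  calc _ ≤ |(omegaFn (s 1) : ℝ) - c (s 1)| + ∑ n ∈ Icc 2 ⌊x⌋₊, |(omegaFn (s n) : ℝ) - c (s n)| :=
        (abs_add_le _ _).trans (add_le_add_right (abs_sum_le_sum_abs _ _) _)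
    _ ≤ X + x * (primeCounting ⌊L⌋₊ + 2 * √L) := by
        grw [hone, sum_le_card_nsmul _ _ _ hrest, nsmul_eq_mul, hcard]

lemma isLittleO_primeCounting_floor :
    (fun y : ℝ => (primeCounting ⌊y⌋₊ : ℝ)) =o[atTop] id := by
  have hbigO : (fun y : ℝ => (primeCounting ⌊y⌋₊ : ℝ)) =O[atTop] fun y => y * (log y)⁻¹ := by
    refine IsBigO.of_bound (log 4 + 1) ?_
    filter_upwards [Chebyshev.eventually_primeCounting_le one_pos, eventually_gt_atTop 1]
      with y hπ hy
    have : 0 < log y := log_pos hy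
    rw [Real.norm_natCast, Real.norm_of_nonneg (by positivity), ← mul_assoc, ← div_eq_mul_inv]
    exact hπ
  have hlittle : (fun y : ℝ => y * (log y)⁻¹) =o[atTop] fun y => y * 1 :=
    (isBigO_refl id atTop).mul_isLittleO inv_log_isLittleO_one
  exact hbigO.trans_isLittleO (hlittle.congr_right fun y => mul_one y)

lemma isLittleO_sqrt_id : (fun y : ℝ => √y) =o[atTop] id := by
  have h := (isLittleO_pow_pow_atTop_of_lt (𝕜 := ℝ) one_lt_two).comp_tendsto tendsto_sqrt_atTop
  refine h.congr' (by simp [Function.comp_def]) ?_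
  filter_upwards [eventually_ge_atTop 0] with y hy
  simp [sq_sqrt hy]

lemma one_le_log2 (x : ℝ) : 1 ≤ log2 x := le_max_left _ _

lemma tendsto_log2_atTop : Tendsto log2 atTop atTop := by
  have hlog1 : Tendsto log1 atTop atTop :=
    tendsto_atTop_mono (fun _ => le_max_right _ _) tendsto_log_atTop
  exact hlog1.comp hlog1

lemma eventually_rpow_add_mul_le {δ : ℝ} (hδ : 0 < δ) :
    ∀ᶠ x in atTop, x ^ (1 / √(log2 x)) + x * (primeCounting ⌊log2 x⌋₊ + 2 * √(log2 x))
      ≤ δ * (x * log2 x) := by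
  have hsmall := ((isLittleO_primeCounting_floor.add
    (isLittleO_sqrt_id.const_mul_left 2)).comp_tendsto tendsto_log2_atTop).bound (half_pos hδ)
  filter_upwards [hsmall, tendsto_log2_atTop.eventually_ge_atTop 4,
    isLittleO_sqrt_id.bound (half_pos hδ), eventually_ge_atTop 1] with x hπ hL4 hsqrt hx
  set L := log2 x
  simp only [Function.comp_apply, id, norm_eq_abs] at hπ hsqrt
  rw [abs_of_nonneg (by positivity), abs_of_nonneg (by positivity)] at hπ
  rw [abs_of_nonneg (by positivity), abs_of_nonneg (by positivity)] at hsqrt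
  have hexp : 1 / √L ≤ 1 / 2 := by
    gcongr
    exact Real.le_sqrt_of_sq_le (by linarith)
  have hX : x ^ (1 / √L) ≤ δ / 2 * (x * L) :=
    calc x ^ (1 / √L) ≤ x ^ (1 / 2 : ℝ) := Real.rpow_le_rpow_of_exponent_le hx hexp
      _ = √x := (Real.sqrt_eq_rpow x).symm
      _ ≤ δ / 2 * x := hsqrt
      _ ≤ δ / 2 * (x * L) := by
        gcongr
        exact le_mul_of_one_le_right (by positivity) (one_le_log2 x)
  have : x * (primeCounting ⌊L⌋₊ + 2 * √L) ≤ x * (δ / 2 * L) := by gcongr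
  linarith

/-- `∑_{n ≤ x} ω(s(n))` equals the number of pairs `(n, p)` with
`n ≤ x`, `p` prime, `log₂ x < p ≤ x^{1/√(log₂ x)}`, `p ∣ s(n)`, up to `o(x log₂ x)`. -/
theorem stmt6 : ∀ δ > (0 : ℝ), ∃ x₀ : ℝ, ∀ x ≥ x₀,
    |(∑ n ∈ Finset.Icc 1 ⌊x⌋₊, (omegaFn (s n) : ℝ)) -
      ((((Finset.Icc 1 ⌊x⌋₊) ×ˢ
          (Finset.Icc 1 ⌊x ^ (1 / Real.sqrt (log2 x))⌋₊)).filter fun np =>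
            np.2.Prime ∧ log2 x < (np.2 : ℝ) ∧
            (np.2 : ℝ) ≤ x ^ (1 / Real.sqrt (log2 x)) ∧ np.2 ∣ s np.1).card : ℝ)| ≤
      δ * (x * log2 x) := by
  intro δ hδ
  obtain ⟨x₀, hx₀⟩ :=
    ((eventually_rpow_add_mul_le hδ).and (eventually_gt_atTop 1)).exists_forall_of_atTop
  refine ⟨x₀, fun x hx => ?_⟩
  obtain ⟨hbound, hx1⟩ := hx₀ x hx
  exact (abs_sum_omegaFn_s_sub_card_le hx1 (zero_lt_one.trans_le (one_le_log2 x))).trans hbound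
end

section
/- There exists a constant C > 0 such that for all sufficiently large x, the number of integers n with 1 ≤ n ≤ x whose largest prime factor satisfies P(n) > x^{1/log₄ x} and whose second-largest prime factor satisfies P₂(n) ≤ x^{1/log₃ x} is at most C · x (log₄ x)/(log₃ x). -/
/-!
Write `n = P(n) m`. If `P(n) > z` and `P₂(n) ≤ y`, then `m = n / P(n)` is a `y`-smooth number
`≤ x` (its largest prime factor is `P₂(n)`) and `P(n)` is a prime in `(z, x/m]`. Chebyshev's bound
`π(t) ≪ t / log t ≤ t / log z` for `t > z` bounds the count by `(x / log z) ∑ 1/m` over `y`-smooth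
`m`, and this reciprocal sum is `≪ log y`: splitting at `eᵗ`, the tail is at most
`t⁻¹ ∑ log m / m = t⁻¹ ∑_{de} Λ(d) / (d e) ≤ (L / t) ∑ 1/m` with `L = ∑ Λ(d)/d ≪ log y`
over smooth `d`, so `t ≍ L` absorbs it. With `log z = log x / log₄ x` and
`log y = log x / log₃ x` this is `≪ x log₄ x / log₃ x`.
-/

open Classical Finset

open Real Chebyshev
open scoped ArithmeticFunction.vonMangoldt

lemma primeCounting_floor_le {t : ℝ} (ht : 1 < t) :
    (⌊t⌋₊.primeCounting : ℝ) ≤ (2 * log 4 + 2) * t / log t := by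
  have hlog : 0 < log t := log_pos ht
  have hsqrt : log t = 2 * log √t := by
    rw [log_sqrt (by linarith)]; ring
  -- `log √t ≤ √t - 1` makes the `√t` error term of size `t / log t` as well
  have hsqrt_le : √t * log t ≤ 2 * t := by
    have h1 := log_le_sub_one_of_pos (Real.sqrt_pos.2 (by linarith : (0:ℝ) < t))
    have h2 := Real.mul_self_sqrt (by linarith : (0:ℝ) ≤ t)
    nlinarith [Real.sqrt_nonneg t]
  calc (⌊t⌋₊.primeCounting : ℝ) ≤ log 4 * t / log √t + √t := pi_le_log4_mul_div ht
    _ = (2 * log 4 * t + √t * log t) / log t := by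
      have : log √t ≠ 0 := by linarith
      rw [hsqrt]; field_simp
    _ ≤ (2 * log 4 + 2) * t / log t := by
      gcongr; linarith

lemma card_filter_prime_Ioc_floor_le {z t : ℝ} (hz : 1 < z) (ht : 0 ≤ t) :
    (#{p ∈ Ioc ⌊z⌋₊ ⌊t⌋₊ | p.Prime} : ℝ) ≤ (2 * log 4 + 2) * t / log z := by
  have hlogz := log_pos hz
  rcases le_or_gt ⌊t⌋₊ ⌊z⌋₊ with hle | hlt
  · rw [Ioc_eq_empty_of_le hle, filter_empty, card_empty, Nat.cast_zero]
    positivity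
  have hzt : z < t := by
    have : ((⌊z⌋₊ + 1 : ℕ) : ℝ) ≤ ⌊t⌋₊ := by exact_mod_cast hlt
    push_cast at this
    linarith [Nat.lt_floor_add_one z, Nat.floor_le ht]
  calc (#{p ∈ Ioc ⌊z⌋₊ ⌊t⌋₊ | p.Prime} : ℝ) ≤ ⌊t⌋₊.primeCounting := by
        rw [← Nat.primesLE_card_eq_primeCounting, Nat.primesLE_eq_filter_Ioc_zero]
        exact_mod_cast card_le_card (filter_subset_filter _ (Ioc_subset_Ioc_left (Nat.zero_le _)))
    _ ≤ (2 * log 4 + 2) * t / log t := primeCounting_floor_le (hz.trans hzt)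
    _ ≤ (2 * log 4 + 2) * t / log z := by gcongr

lemma sum_primesLE_div_mul_log_le_log_factorial (n : ℕ) :
    ∑ p ∈ Nat.primesLE n, ((n / p : ℕ) : ℝ) * log p ≤ log n.factorial := by
  rw [log_nat_eq_sum_factorization, Finsupp.sum, Nat.support_factorization]
  have hsub : Nat.primesLE n ⊆ n.factorial.primeFactors := fun p hp ↦ by
    obtain ⟨hpn, hp⟩ := Nat.mem_primesLE.1 hp
    exact Nat.mem_primeFactors.2 ⟨hp, hp.dvd_factorial.2 hpn, n.factorial_ne_zero⟩
  refine (sum_le_sum fun p hp ↦ ?_).trans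
    (sum_le_sum_of_subset_of_nonneg hsub fun p _ _ ↦ by positivity)
  obtain ⟨-, hp⟩ := Nat.mem_primesLE.1 hp
  have : n / p ≤ n.factorial.factorization p := by
    rw [Nat.factorization_factorial hp (by omega : Nat.log p n < Nat.log p n + 2)]
    simpa using single_le_sum (f := fun i ↦ n / p ^ i) (fun _ _ ↦ Nat.zero_le _)
      (show 1 ∈ Ico 1 (Nat.log p n + 2) by simp)
  gcongr

lemma sum_primesLE_log_div_le (n : ℕ) :
    ∑ p ∈ Nat.primesLE n, log p / p ≤ log n + log 4 := by
  rcases Nat.eq_zero_or_pos n with rfl | hn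
  · simp [Nat.primesLE_zero]; positivity
  have hn' : (0 : ℝ) < n := by exact_mod_cast hn
  rw [← mul_le_mul_iff_of_pos_left hn', mul_sum]
  calc ∑ p ∈ Nat.primesLE n, (n : ℝ) * (log p / p)
      ≤ ∑ p ∈ Nat.primesLE n, (((n / p : ℕ) : ℝ) * log p + log p) := by
        refine sum_le_sum fun p hp ↦ ?_
        have hp := Nat.prime_of_mem_primesLE hp
        have : (n : ℝ) / p ≤ (n / p : ℕ) + 1 := by
          rw [← Nat.floor_div_eq_div (K := ℝ)]
          exact (Nat.lt_floor_add_one _).le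
        rw [← mul_div_assoc, mul_div_right_comm, ← add_one_mul]
        exact mul_le_mul_of_nonneg_right this (log_natCast_nonneg p)
    _ ≤ log n.factorial + log 4 * n := by
        rw [sum_add_distrib, ← theta_eq_sum_primesLE_log]
        gcongr
        · exact sum_primesLE_div_mul_log_le_log_factorial n
        · exact theta_le_log4_mul_x (Nat.cast_nonneg n)
    _ ≤ n * (log n + log 4) := by
        have : log n.factorial ≤ n * log n := by
          rw [← log_pow]
          exact log_le_log (by positivity) (by exact_mod_cast n.factorial_le_pow)
        linarith

lemma sum_log_div_le_sum_vonMangoldt_div_mul_sum_inv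
    {S : Finset ℕ} (hS : ∀ m ∈ S, ∀ d ∈ m.divisors, d ∈ S) :
    ∑ m ∈ S, log m / m ≤ (∑ d ∈ S, Λ d / d) * ∑ e ∈ S, (e : ℝ)⁻¹ := by
  have hterm (m : ℕ) : log m / m = ∑ x ∈ m.divisorsAntidiagonal, Λ x.1 / x.1 * (x.2 : ℝ)⁻¹ := by
    rw [← ArithmeticFunction.vonMangoldt_sum, sum_div, Nat.sum_divisorsAntidiagonal
      (fun d e ↦ Λ d / d * (e : ℝ)⁻¹)]
    refine sum_congr rfl fun d hd ↦ ?_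
    obtain ⟨hdm, hm⟩ := Nat.mem_divisors.1 hd
    have hd0 : (d : ℝ) ≠ 0 := by exact_mod_cast Nat.ne_of_gt (Nat.pos_of_dvd_of_pos hdm
      (Nat.pos_of_ne_zero hm))
    rw [Nat.cast_div hdm hd0]
    field_simp
  have hdisj : (S : Set ℕ).PairwiseDisjoint Nat.divisorsAntidiagonal := by
    intro m _ m' _ hmm'
    refine Finset.disjoint_left.2 fun x hx hx' ↦ hmm' ?_
    rw [← (Nat.mem_divisorsAntidiagonal.1 hx).1, (Nat.mem_divisorsAntidiagonal.1 hx').1]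
  have hsub : S.biUnion Nat.divisorsAntidiagonal ⊆ S ×ˢ S := by
    intro x hx
    obtain ⟨m, hm, hx⟩ := mem_biUnion.1 hx
    exact mem_product.2 ⟨hS m hm _ (Nat.fst_mem_divisors_of_mem_antidiagonal hx),
      hS m hm _ (Nat.snd_mem_divisors_of_mem_antidiagonal hx)⟩
  calc ∑ m ∈ S, log m / m
      = ∑ x ∈ S.biUnion Nat.divisorsAntidiagonal, Λ x.1 / x.1 * (x.2 : ℝ)⁻¹ := by
        rw [sum_biUnion hdisj]; exact sum_congr rfl fun m _ ↦ hterm m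
    _ ≤ ∑ x ∈ S ×ˢ S, Λ x.1 / x.1 * (x.2 : ℝ)⁻¹ :=
        sum_le_sum_of_subset_of_nonneg hsub fun x _ _ ↦ by
          have := ArithmeticFunction.vonMangoldt_nonneg (n := x.1); positivity
    _ = (∑ d ∈ S, Λ d / d) * ∑ e ∈ S, (e : ℝ)⁻¹ := by
        rw [sum_product, sum_mul_sum]

lemma sum_range_succ_inv_le (K : ℕ) : ∑ m ∈ range (K + 1), (m : ℝ)⁻¹ ≤ 1 + log K := by
  have := harmonic_le_one_add_log K
  rw [sum_range_succ', Nat.cast_zero, inv_zero, add_zero]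
  simpa [harmonic] using this

lemma sum_inv_le_of_mem_divisors
    {S : Finset ℕ} (hS : ∀ m ∈ S, ∀ d ∈ m.divisors, d ∈ S) :
    ∑ m ∈ S, (m : ℝ)⁻¹ ≤ 4 * ∑ d ∈ S, Λ d / d + 6 := by
  set L := ∑ d ∈ S, Λ d / d
  set F := ∑ m ∈ S, (m : ℝ)⁻¹
  have hL : 0 ≤ L := sum_nonneg fun d _ ↦ by
    have := ArithmeticFunction.vonMangoldt_nonneg (n := d); positivity
  have hF : 0 ≤ F := sum_nonneg fun m _ ↦ by positivity
  -- large enough that the tail bound `L F / t` is at most `F / 2`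
  set t := 2 * L + 2
  have ht : 0 < t := by positivity
  have hsmall : ∑ m ∈ S with m ≤ ⌊exp t⌋₊, (m : ℝ)⁻¹ ≤ 1 + t := by
    calc ∑ m ∈ S with m ≤ ⌊exp t⌋₊, (m : ℝ)⁻¹
        ≤ ∑ m ∈ range (⌊exp t⌋₊ + 1), (m : ℝ)⁻¹ := by
          refine sum_le_sum_of_subset_of_nonneg (fun m hm ↦ ?_) fun m _ _ ↦ by positivity
          exact mem_range.2 (Nat.lt_succ_of_le (mem_filter.1 hm).2)
      _ ≤ 1 + log ⌊exp t⌋₊ := sum_range_succ_inv_le _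
      _ ≤ 1 + t := by
          rcases Nat.eq_zero_or_pos ⌊exp t⌋₊ with h | h
          · rw [h, Nat.cast_zero, log_zero]; linarith
          · have := log_le_log (by exact_mod_cast h) (Nat.floor_le (exp_pos t).le)
            rw [log_exp] at this; linarith
  have hlarge : ∑ m ∈ S with ¬ m ≤ ⌊exp t⌋₊, (m : ℝ)⁻¹ ≤ F / 2 := by
    calc ∑ m ∈ S with ¬ m ≤ ⌊exp t⌋₊, (m : ℝ)⁻¹
        ≤ ∑ m ∈ S with ¬ m ≤ ⌊exp t⌋₊, log m / m / t := by
          refine sum_le_sum fun m hm ↦ ?_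
          have hm := Nat.lt_of_floor_lt (not_le.1 (mem_filter.1 hm).2)
          have hm0 : (0 : ℝ) < m := (exp_pos t).trans hm
          have : t < log m := by rw [← log_exp t]; exact log_lt_log (exp_pos t) hm
          rw [div_div, inv_eq_one_div, div_le_div_iff₀ hm0 (by positivity)]
          nlinarith
      _ ≤ ∑ m ∈ S, log m / m / t := by
          refine sum_le_sum_of_subset_of_nonneg (filter_subset _ _) fun m _ _ ↦ ?_
          have := log_natCast_nonneg m; positivity
      _ ≤ L * F / t := by
          rw [← sum_div]
          exact div_le_div_of_nonneg_right
            (sum_log_div_le_sum_vonMangoldt_div_mul_sum_inv hS) ht.le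
      _ ≤ F / 2 := by
          rw [div_le_div_iff₀ ht two_pos]; nlinarith
  have := sum_filter_add_sum_filter_not S (· ≤ ⌊exp t⌋₊) fun m ↦ (m : ℝ)⁻¹
  linarith

lemma mem_smoothNumbersUpTo_of_mem_divisors {M N m d : ℕ} (hm : m ∈ Nat.smoothNumbersUpTo M N)
    (hd : d ∈ m.divisors) : d ∈ Nat.smoothNumbersUpTo M N := by
  obtain ⟨hmM, hm⟩ := Nat.mem_smoothNumbersUpTo.1 hm
  exact Nat.mem_smoothNumbersUpTo.2 ⟨(Nat.divisor_le hd).trans hmM,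
    Nat.mem_smoothNumbers_of_dvd hm (Nat.dvd_of_mem_divisors hd)⟩

lemma sum_vonMangoldt_div_smoothNumbersUpTo_le (M N : ℕ) :
    ∑ d ∈ Nat.smoothNumbersUpTo M N, Λ d / d ≤ 2 * ∑ p ∈ Nat.primesBelow N, log p / p := by
  set S := Nat.smoothNumbersUpTo M N
  have hsupp : ∀ d ∈ S, Λ d / d ≠ 0 → d ∈ (Nat.primesBelow N ×ˢ Ico 1 (M + 1)).image
      fun x ↦ x.1 ^ x.2 := by
    intro d hd hΛ
    obtain ⟨p, k, hp, hk, rfl⟩ := (isPrimePow_nat_iff d).1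
      (ArithmeticFunction.vonMangoldt_ne_zero_iff.1 (left_ne_zero_of_mul hΛ))
    obtain ⟨hdM, hd⟩ := Nat.mem_smoothNumbersUpTo.1 hd
    refine mem_image.2 ⟨(p, k), mem_product.2 ⟨?_, ?_⟩, rfl⟩
    · exact Nat.mem_primesBelow.2 ⟨Nat.mem_smoothNumbers'.1 hd p hp (dvd_pow_self p hk.ne'), hp⟩
    · exact mem_Ico.2 ⟨hk, Nat.lt_succ_of_le ((Nat.lt_pow_self hp.one_lt).le.trans hdM)⟩
  have hnonneg (d : ℕ) : 0 ≤ Λ d / d := by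
    have := ArithmeticFunction.vonMangoldt_nonneg (n := d); positivity
  calc ∑ d ∈ S, Λ d / d
      = ∑ d ∈ S with d ∈ (Nat.primesBelow N ×ˢ Ico 1 (M + 1)).image fun x ↦ x.1 ^ x.2,
          Λ d / d := (sum_filter_of_ne hsupp).symm
    _ ≤ ∑ d ∈ (Nat.primesBelow N ×ˢ Ico 1 (M + 1)).image (fun x ↦ x.1 ^ x.2), Λ d / d :=
        sum_le_sum_of_subset_of_nonneg (fun d hd ↦ (mem_filter.1 hd).2) fun d _ _ ↦ hnonneg d
    _ ≤ ∑ x ∈ Nat.primesBelow N ×ˢ Ico 1 (M + 1), Λ (x.1 ^ x.2) / ((x.1 ^ x.2 : ℕ) : ℝ) :=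
        sum_image_le_of_nonneg fun d _ ↦ hnonneg d
    _ = ∑ p ∈ Nat.primesBelow N, log p * ∑ k ∈ Ico 1 (M + 1), ((p : ℝ)⁻¹) ^ k := by
        rw [sum_product]
        refine sum_congr rfl fun p hp ↦ ?_
        rw [mul_sum]
        refine sum_congr rfl fun k hk ↦ ?_
        rw [ArithmeticFunction.vonMangoldt_apply_pow (by have := (mem_Ico.1 hk).1; omega),
          ArithmeticFunction.vonMangoldt_apply_prime (Nat.prime_of_mem_primesBelow hp)]
        push_cast
        rw [inv_pow, div_eq_mul_inv]
    _ ≤ ∑ p ∈ Nat.primesBelow N, log p * (2 / p) := by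
        refine sum_le_sum fun p hp ↦ ?_
        have hp2 : (2 : ℝ) ≤ p := by exact_mod_cast (Nat.prime_of_mem_primesBelow hp).two_le
        have hq : (p : ℝ)⁻¹ ≤ 2⁻¹ := inv_anti₀ two_pos hp2
        gcongr
        calc ∑ k ∈ Ico 1 (M + 1), ((p : ℝ)⁻¹) ^ k ≤ (p : ℝ)⁻¹ ^ 1 / (1 - (p : ℝ)⁻¹) :=
              geom_sum_Ico_le_of_lt_one (by positivity) (by linarith)
          _ ≤ 2 / p := by
              rw [pow_one, div_le_div_iff₀ (by linarith) (by linarith),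
                inv_mul_cancel₀ (by positivity)]
              linarith
    _ = 2 * ∑ p ∈ Nat.primesBelow N, log p / p := by
        rw [mul_sum]
        exact sum_congr rfl fun p _ ↦ by ring

lemma sum_inv_smoothNumbersUpTo_le (M n : ℕ) :
    ∑ m ∈ Nat.smoothNumbersUpTo M (n + 1), (m : ℝ)⁻¹ ≤ 8 * log n + (8 * log 4 + 6) := by
  have := sum_inv_le_of_mem_divisors fun m hm d hd ↦
    mem_smoothNumbersUpTo_of_mem_divisors (M := M) (N := n + 1) hm hd
  have := sum_vonMangoldt_div_smoothNumbersUpTo_le M (n + 1)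
  have := sum_primesLE_log_div_le n
  rw [← Nat.primesLE] at *
  linarith

lemma le_P_of_mem_primeFactors {m q : ℕ} (hq : q ∈ m.primeFactors) : q ≤ P m :=
  (le_sup (f := id) hq).trans (le_max_right _ _)

lemma P_mem_primeFactors {n : ℕ} (h : 1 < P n) : P n ∈ n.primeFactors := by
  have hsup : 1 < n.primeFactors.sup id := (lt_max_iff.1 h).resolve_left (lt_irrefl 1)
  have hne : n.primeFactors.Nonempty := nonempty_iff_ne_empty.2 fun h ↦ by simp [h] at hsup
  obtain ⟨p, hp, hps⟩ := exists_mem_eq_sup _ hne id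
  rw [P, max_eq_right hsup.le, hps]
  exact hp

lemma mem_smoothNumbers_of_P_le {m : ℕ} {y : ℝ} (hm : m ≠ 0) (h : (P m : ℝ) ≤ y) :
    m ∈ Nat.smoothNumbers (⌊y⌋₊ + 1) :=
  Nat.mem_smoothNumbers'.2 fun _ hp hpm ↦ Nat.lt_succ_of_le <| Nat.le_floor <|
    (Nat.cast_le.2 (le_P_of_mem_primeFactors (Nat.mem_primeFactors.2 ⟨hp, hpm, hm⟩))).trans h

theorem card_filter_lt_P_and_P2_le {x y z : ℝ} (hx : 0 ≤ x) (hy : 1 ≤ y) (hz : 1 < z) :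
    (#{n ∈ Icc 1 ⌊x⌋₊ | z < P n ∧ P2 n ≤ y} : ℝ) ≤
      (2 * log 4 + 2) * (8 * log y + (8 * log 4 + 6)) * x / log z := by
  set S := Nat.smoothNumbersUpTo ⌊x⌋₊ (⌊y⌋₊ + 1)
  have hsub : {n ∈ Icc 1 ⌊x⌋₊ | z < P n ∧ P2 n ≤ y} ⊆
      S.biUnion fun m ↦ {p ∈ Ioc ⌊z⌋₊ ⌊x / m⌋₊ | p.Prime}.image (· * m) := by
    intro n hn
    obtain ⟨hn, hzP, hP2⟩ := mem_filter.1 hn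
    obtain ⟨hn1, hnx⟩ := mem_Icc.1 hn
    have hPn := P_mem_primeFactors (by exact_mod_cast hz.trans hzP : 1 < P n)
    obtain ⟨hp, hpn, -⟩ := Nat.mem_primeFactors.1 hPn
    have hnm : P n * (n / P n) = n := Nat.mul_div_cancel' hpn
    have hm0 : n / P n ≠ 0 := by rintro h; rw [h, mul_zero] at hnm; omega
    refine mem_biUnion.2 ⟨n / P n, Nat.mem_smoothNumbersUpTo.2 ⟨(Nat.div_le_self n _).trans hnx,
      mem_smoothNumbers_of_P_le hm0 hP2⟩, mem_image.2 ⟨P n, mem_filter.2 ⟨mem_Ioc.2 ⟨?_, ?_⟩, hp⟩,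
      by rw [mul_comm, Nat.div_mul_cancel hpn]⟩⟩
    · exact (Nat.floor_lt (by linarith)).2 hzP
    · have hm : (0 : ℝ) < (n / P n : ℕ) := by exact_mod_cast Nat.pos_of_ne_zero hm0
      refine Nat.le_floor ((le_div_iff₀ hm).2 ?_)
      calc (P n : ℝ) * (n / P n : ℕ) = n := by exact_mod_cast hnm
        _ ≤ x := (Nat.cast_le.2 hnx).trans (Nat.floor_le hx)
  have hlogy : log ⌊y⌋₊ ≤ log y :=
    log_le_log (by exact_mod_cast Nat.floor_pos.2 hy) (Nat.floor_le (by linarith))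
  calc (#{n ∈ Icc 1 ⌊x⌋₊ | z < P n ∧ P2 n ≤ y} : ℝ)
      ≤ ∑ m ∈ S, (#{p ∈ Ioc ⌊z⌋₊ ⌊x / m⌋₊ | p.Prime} : ℝ) := by
        exact_mod_cast (card_le_card hsub).trans <|
          card_biUnion_le.trans (sum_le_sum fun _ _ ↦ card_image_le)
    _ ≤ ∑ m ∈ S, (2 * log 4 + 2) * (x / m) / log z :=
        sum_le_sum fun m _ ↦ card_filter_prime_Ioc_floor_le hz (by positivity)
    _ = (2 * log 4 + 2) * x / log z * ∑ m ∈ S, (m : ℝ)⁻¹ := by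
        rw [mul_sum]; exact sum_congr rfl fun m _ ↦ by ring
    _ ≤ (2 * log 4 + 2) * x / log z * (8 * log y + (8 * log 4 + 6)) := by
        have := log_pos hz
        gcongr
        exact (sum_inv_smoothNumbersUpTo_le _ _).trans (by linarith)
    _ = (2 * log 4 + 2) * (8 * log y + (8 * log 4 + 6)) * x / log z := by ring

lemma log1_le_self {t : ℝ} (ht : 1 ≤ t) : log1 t ≤ t :=
  max_le ht ((log_le_sub_one_of_pos (by linarith)).trans (by linarith))

lemma log3_le_log {x : ℝ} (hx : 1 ≤ log x) : log3 x ≤ log x :=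
  calc log3 x ≤ log2 x := log1_le_self (le_max_left _ _)
    _ ≤ log1 x := log1_le_self (le_max_left _ _)
    _ = log x := max_eq_right hx

/-- the number of `n ≤ x` with `P(n) > x^{1/log₄ x}` and
`P₂(n) ≤ x^{1/log₃ x}` is `≪ x log₄ x / log₃ x`. -/
theorem stmt17 : ∃ C > (0 : ℝ), ∃ x₀ : ℝ, ∀ x ≥ x₀,
    (((Finset.Icc 1 ⌊x⌋₊).filter fun n =>
        x ^ (1 / log4 x) < (P n : ℝ) ∧ (P2 n : ℝ) ≤ x ^ (1 / log3 x)).card : ℝ) ≤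
      C * (x * log4 x / log3 x) := by
  refine ⟨(2 * log 4 + 2) * (14 + 8 * log 4), by positivity, exp 1, fun x hx ↦ ?_⟩
  have hlogx : 1 ≤ log x := by simpa using log_le_log (exp_pos 1) hx
  have hx1 : 1 < x := (one_lt_exp_iff.2 one_pos).trans_le hx
  have h3 : 1 ≤ log3 x := le_max_left _ _
  have h4 : 1 ≤ log4 x := le_max_left _ _
  set z := x ^ (1 / log4 x)
  set y := x ^ (1 / log3 x)
  have hlogz : log z = log x / log4 x := by rw [log_rpow (by linarith)]; ring
  have hlogy : log y = log x / log3 x := by rw [log_rpow (by linarith)]; ring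
  have hlogz_pos : 0 < log z := by rw [hlogz]; positivity
  have hlogy_one : 1 ≤ log y := by
    rw [hlogy, le_div_iff₀ (by linarith), one_mul]; exact log3_le_log hlogx
  calc _ ≤ (2 * log 4 + 2) * (8 * log y + (8 * log 4 + 6)) * x / log z :=
        card_filter_lt_P_and_P2_le (by linarith) (one_le_rpow hx1.le (by positivity))
          (one_lt_rpow hx1 (by positivity))
    _ ≤ (2 * log 4 + 2) * ((14 + 8 * log 4) * log y) * x / log z := by
        have : 0 < log 4 := log_pos (by norm_num)
        gcongr
        nlinarith
    _ = (2 * log 4 + 2) * (14 + 8 * log 4) * (x * log4 x / log3 x) := by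
        rw [hlogy, hlogz]
        field_simp
end

section
/- There exists a constant C > 0 such that for all sufficiently large x, the number of integers n with 1 ≤ n ≤ x such that P(n) > x^{1/log₃ x} and n has a prime factor strictly between P(n)/2 and P(n) is at most C · x (log₃ x)/(log x). -/
open Classical Finset

lemma my_log_le_two_sqrt {t : ℝ} (ht : 1 ≤ t) : Real.log t ≤ 2 * Real.sqrt t := by
  have h0 : (0:ℝ) < t := by linarith
  have h1 : Real.log t = 2 * Real.log (Real.sqrt t) := by
    rw [Real.log_sqrt h0.le]; ring
  have h2 : Real.log (Real.sqrt t) ≤ Real.sqrt t - 1 :=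
    Real.log_le_sub_one_of_pos (Real.sqrt_pos.mpr h0)
  nlinarith [Real.sqrt_nonneg t]

lemma my_sum_inv_sq (a : ℕ) (ha : 1 ≤ a) : ∀ b, ∑ k ∈ Icc (a+1) b, (1:ℝ)/(k:ℝ)^2 ≤ 1/a := by
  have key : ∀ b, a ≤ b → ∑ k ∈ Icc (a+1) b, (1:ℝ)/(k:ℝ)^2 ≤ 1/a - 1/b := by
    intro b hb
    induction b, hb using Nat.le_induction with
    | base => simp
    | succ n hn ih =>
      rw [Finset.sum_Icc_succ_top (by omega)]
      have hn0 : (0:ℝ) < n := by exact_mod_cast Nat.pos_of_ne_zero (by omega)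
      have hn1 : (0:ℝ) < (n:ℝ)+1 := by linarith
      have : (1:ℝ)/((n:ℝ)+1)^2 ≤ 1/n - 1/(n+1) := by
        rw [div_sub_div _ _ (ne_of_gt hn0) (ne_of_gt hn1)]
        rw [div_le_div_iff₀ (by positivity) (by positivity)]
        ring_nf; nlinarith
      push_cast
      push_cast at ih
      linarith
  intro b
  rcases le_or_gt a b with h | h
  · calc _ ≤ 1/(a:ℝ) - 1/b := key b h
      _ ≤ 1/a := by
        have : (0:ℝ) ≤ 1/(b:ℝ) := by positivity
        linarith
  · rw [Finset.Icc_eq_empty (by omega)]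
    simp only [Finset.sum_empty]
    positivity

lemma my_cheb (k : ℕ) (hk : 2 ≤ k) :
    ((Finset.Ioc (2^(k-1)) (2^(k+1))).filter Nat.Prime).card * (k-1) ≤ 2^(k+2) := by
  set T := (Finset.Ioc (2^(k-1)) (2^(k+1))).filter Nat.Prime with hT
  have hsub : T ⊆ (Finset.range (2^(k+1)+1)).filter Nat.Prime := by
    intro q hq
    simp only [hT, Finset.mem_filter, Finset.mem_Ioc, Finset.mem_range] at hq ⊢
    exact ⟨by omega, hq.2⟩
  have hprod : ∏ q ∈ T, q ≤ primorial (2^(k+1)) := by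
    apply Finset.prod_le_prod_of_subset_of_one_le' hsub
    intro i hi _
    exact (Finset.mem_filter.mp hi).2.one_lt.le
  have h4 : primorial (2^(k+1)) ≤ 4 ^ (2^(k+1)) := primorial_le_4_pow _
  have hlow : (2^(k-1)) ^ T.card ≤ ∏ q ∈ T, q := by
    apply Finset.pow_card_le_prod
    intro q hq
    have := (Finset.mem_filter.mp hq).1
    simp only [Finset.mem_Ioc] at this
    omega
  have : (2:ℕ) ^ ((k-1) * T.card) ≤ 2 ^ (2^(k+2)) := by
    rw [pow_mul]
    calc (2^(k-1))^T.card ≤ primorial (2^(k+1)) := le_trans hlow hprod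
      _ ≤ 4 ^ (2^(k+1)) := h4
      _ = 2 ^ (2^(k+2)) := by
          rw [show (4:ℕ) = 2^2 by norm_num, ← pow_mul, pow_succ]
          ring_nf
  have := (Nat.pow_le_pow_iff_right (by norm_num : 1 < 2)).mp this
  rw [mul_comm] at this
  exact this

lemma my_P_prime_dvd {n : ℕ} (hn : 2 ≤ n) : (P n).Prime ∧ P n ∣ n := by
  have hne : n.primeFactors.Nonempty := by
    rw [Nat.nonempty_primeFactors]; omega
  obtain ⟨p, hp, hsup⟩ := Finset.exists_mem_eq_sup _ hne id
  have hp' := Nat.mem_primeFactors.mp hp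
  have : P n = p := by
    rw [P, hsup, id]
    exact max_eq_right hp'.1.one_lt.le
  rw [this]
  exact ⟨hp'.1, hp'.2.1⟩

set_option maxHeartbeats 1000000 in
/-- the number of `n ≤ x` with `P(n) > x^{1/log₃ x}` having a prime
factor strictly between `P(n)/2` and `P(n)` is `≪ x log₃ x / log x`. -/
theorem stmt18 : ∃ C > (0 : ℝ), ∃ x₀ : ℝ, ∀ x ≥ x₀,
    (((Finset.Icc 1 ⌊x⌋₊).filter fun n =>
        x ^ (1 / log3 x) < (P n : ℝ) ∧
        ∃ p : ℕ, p.Prime ∧ p ∣ n ∧ (P n : ℝ) / 2 < (p : ℝ) ∧ p < P n).card : ℝ) ≤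
      C * (x * log3 x / Real.log x) := by
  refine ⟨512, by norm_num, Real.exp 1024, fun x hx => ?_⟩
  have hx0 : (0:ℝ) < x := lt_of_lt_of_le (Real.exp_pos _) hx
  have hlx : (1024:ℝ) ≤ Real.log x := by
    calc (1024:ℝ) = Real.log (Real.exp 1024) := (Real.log_exp _).symm
      _ ≤ Real.log x := Real.log_le_log (Real.exp_pos _) hx
  have h3one : (1:ℝ) ≤ log3 x := le_max_left _ _
  have h3pos : (0:ℝ) < log3 x := by linarith
  -- key : 16 * log3 x ≤ log x
  have hsq : Real.sqrt (Real.log x) ^ 2 = Real.log x := Real.sq_sqrt (by linarith)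
  have hsqnn : (0:ℝ) ≤ Real.sqrt (Real.log x) := Real.sqrt_nonneg _
  have hsq32 : (32:ℝ) ≤ Real.sqrt (Real.log x) := by nlinarith
  have hlog2le : log2 x ≤ Real.log x := by
    have h1 : log1 x = Real.log x := max_eq_right (by linarith)
    have h2 : log2 x = max 1 (Real.log (Real.log x)) := by rw [log2, h1, log1]
    have h3 : Real.log (Real.log x) ≤ Real.log x := Real.log_le_self (by linarith)
    rw [h2]
    exact max_le (by linarith) h3
  have h3le : log3 x ≤ 2 * Real.sqrt (Real.log x) := by
    have h2pos : (0:ℝ) < log2 x := lt_of_lt_of_le one_pos (le_max_left _ _)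
    have : Real.log (log2 x) ≤ Real.log (Real.log x) :=
      Real.log_le_log h2pos hlog2le
    have hll : Real.log (Real.log x) ≤ 2 * Real.sqrt (Real.log x) :=
      my_log_le_two_sqrt (by linarith)
    exact max_le (by linarith) (by linarith)
  have hkey : 16 * log3 x ≤ Real.log x := by nlinarith
  set y := x ^ ((1:ℝ) / log3 x) with hy
  have hy0 : (0:ℝ) < y := Real.rpow_pos_of_pos hx0 _
  have hlogy : Real.log y = Real.log x / log3 x := by
    rw [hy, Real.log_rpow hx0]; ring
  have hylarge : (16:ℝ) ≤ Real.log y := by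
    rw [hlogy, le_div_iff₀ h3pos]; linarith
  set N := ⌊x⌋₊ with hN
  set K := Nat.log 2 ⌈y⌉₊ with hK
  set L := Nat.log 2 N with hL
  -- bounds on K
  have hceil : (⌈y⌉₊ : ℝ) < 2 ^ (K + 1) := by
    have := Nat.lt_pow_succ_log_self (by norm_num : 1 < 2) ⌈y⌉₊
    exact_mod_cast this
  have hKbig : Real.log y < (K:ℝ) + 1 := by
    have h1 : y < (2:ℝ) ^ (K+1) := lt_of_le_of_lt (Nat.le_ceil y) hceil
    have h2 : Real.log y < Real.log ((2:ℝ) ^ (K+1)) := Real.log_lt_log hy0 h1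
    rw [Real.log_pow] at h2
    push_cast at h2
    have h3 : Real.log 2 < 1 := by
      have := Real.log_two_lt_d9; linarith
    have h4 : (0:ℝ) < (K:ℝ)+1 := by positivity
    nlinarith [Real.log_nonneg (by norm_num : (1:ℝ) ≤ 2)]
  have hK15 : (15:ℝ) ≤ (K:ℝ) := by linarith
  have hK2 : 2 ≤ K := by exact_mod_cast le_trans (by norm_num : (2:ℝ) ≤ 15) hK15
  have hKhalf : Real.log y / 2 ≤ (K:ℝ) := by linarith
  set S := (Finset.Icc 1 N).filter fun n =>
      x ^ ((1:ℝ) / log3 x) < (P n : ℝ) ∧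
      ∃ p : ℕ, p.Prime ∧ p ∣ n ∧ (P n : ℝ) / 2 < (p : ℝ) ∧ p < P n with hS
  set Pairs := ((Finset.Icc 1 N) ×ˢ (Finset.Icc 1 N)).filter
      (fun pq => pq.1.Prime ∧ pq.2.Prime ∧ y < (pq.1:ℝ) ∧ pq.2 < pq.1 ∧ pq.1 < 2*pq.2)
      with hPairs
  -- Step A: subset of a biUnion of multiples
  have hSsub : S ⊆ Pairs.biUnion
      (fun pq => (Finset.Icc 1 N).filter (fun n => pq.1 * pq.2 ∣ n)) := by
    intro n hn
    rw [hS, Finset.mem_filter] at hn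
    obtain ⟨hnIcc, hyP, p, hp, hpdvd, hhalf, hplt⟩ := hn
    have hn1 : 1 ≤ n := (Finset.mem_Icc.mp hnIcc).1
    have hpn : p ≤ n := Nat.le_of_dvd hn1 hpdvd
    have hn2 : 2 ≤ n := le_trans hp.two_le hpn
    obtain ⟨hPprime, hPdvd⟩ := my_P_prime_dvd hn2
    have hPn : P n ≤ n := Nat.le_of_dvd hn1 hPdvd
    have hnN : n ≤ N := (Finset.mem_Icc.mp hnIcc).2
    rw [Finset.mem_biUnion]
    refine ⟨(P n, p), ?_, ?_⟩
    · rw [hPairs, Finset.mem_filter, Finset.mem_product]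
      refine ⟨⟨Finset.mem_Icc.mpr ⟨hPprime.one_lt.le, le_trans hPn hnN⟩,
        Finset.mem_Icc.mpr ⟨hp.one_lt.le, le_trans hpn hnN⟩⟩,
        hPprime, hp, hyP, hplt, ?_⟩
      have : (P n : ℝ) < 2 * p := by linarith
      exact_mod_cast this
    · rw [Finset.mem_filter]
      refine ⟨hnIcc, ?_⟩
      have hne : P n ≠ p := ne_of_gt hplt
      exact (Nat.Coprime.mul_dvd_of_dvd_of_dvd
        ((Nat.coprime_primes hPprime hp).mpr hne) hPdvd hpdvd)
  -- Step B: card bound by the sum of x/(p*q)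
  have hcard1 : (S.card : ℝ) ≤ ∑ pq ∈ Pairs, x / ((pq.1 : ℝ) * (pq.2 : ℝ)) := by
    calc (S.card : ℝ)
        ≤ ((Pairs.biUnion
            (fun pq => (Finset.Icc 1 N).filter (fun n => pq.1 * pq.2 ∣ n))).card : ℝ) := by
          exact_mod_cast Finset.card_le_card hSsub
      _ ≤ ((∑ pq ∈ Pairs,
            ((Finset.Icc 1 N).filter (fun n => pq.1 * pq.2 ∣ n)).card : ℕ) : ℝ) := by
          exact_mod_cast Finset.card_biUnion_le
      _ = ∑ pq ∈ Pairs,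
            (((Finset.Icc 1 N).filter (fun n => pq.1 * pq.2 ∣ n)).card : ℝ) := by
          push_cast; rfl
      _ ≤ ∑ pq ∈ Pairs, x / ((pq.1 : ℝ) * (pq.2 : ℝ)) := by
          apply Finset.sum_le_sum
          intro pq hpq
          rw [hPairs, Finset.mem_filter, Finset.mem_product] at hpq
          obtain ⟨⟨h1, h2⟩, hp1, hp2, -, -, -⟩ := hpq
          have hq0 : (0:ℝ) < (pq.1 : ℝ) * (pq.2 : ℝ) := by
            have := hp1.pos; have := hp2.pos; positivity
          have hcardeq : ((Finset.Icc 1 N).filter (fun n => pq.1 * pq.2 ∣ n)).card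
              = N / (pq.1 * pq.2) := by
            rw [show Finset.Icc 1 N = Finset.Ioc 0 N from (Finset.Icc_add_one_left_eq_Ioc 0 N)]
            exact Nat.Ioc_filter_dvd_card_eq_div N (pq.1 * pq.2)
          rw [hcardeq]
          calc ((N / (pq.1 * pq.2) : ℕ) : ℝ) ≤ (N : ℝ) / ((pq.1 * pq.2 : ℕ) : ℝ) :=
                Nat.cast_div_le
            _ ≤ x / ((pq.1:ℝ) * (pq.2:ℝ)) := by
                push_cast
                gcongr
                exact Nat.floor_le hx0.le
  -- Step C: fiberwise decomposition over k = Nat.log 2 p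
  have hmap : ∀ pq ∈ Pairs, Nat.log 2 pq.1 ∈ Finset.Icc K L := by
    intro pq hpq
    rw [hPairs, Finset.mem_filter, Finset.mem_product] at hpq
    obtain ⟨⟨h1, h2⟩, hp1, hp2, hyp, -, -⟩ := hpq
    rw [Finset.mem_Icc]
    constructor
    · exact Nat.log_mono_right (Nat.ceil_le.mpr hyp.le)
    · exact Nat.log_mono_right (Finset.mem_Icc.mp h1).2
  have hfib : ∑ pq ∈ Pairs, x / ((pq.1 : ℝ) * (pq.2 : ℝ))
      = ∑ k ∈ Finset.Icc K L, ∑ pq ∈ Pairs.filter (fun pq => Nat.log 2 pq.1 = k),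
          x / ((pq.1 : ℝ) * (pq.2 : ℝ)) :=
    (Finset.sum_fiberwise_of_maps_to hmap _).symm
  -- Step D: per-fiber bound
  have hfibbound : ∀ k ∈ Finset.Icc K L,
      ∑ pq ∈ Pairs.filter (fun pq => Nat.log 2 pq.1 = k),
        x / ((pq.1 : ℝ) * (pq.2 : ℝ)) ≤ 128 * x / (k:ℝ)^2 := by
    intro k hk
    have hkK : K ≤ k := (Finset.mem_Icc.mp hk).1
    have hk2 : 2 ≤ k := le_trans hK2 hkK
    set A := (Finset.Ioc (2^(k-1)) (2^(k+1))).filter Nat.Prime with hA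
    set F := Pairs.filter (fun pq => Nat.log 2 pq.1 = k) with hF
    -- facts about elements of F
    have hmem : ∀ pq ∈ F, 2^k ≤ pq.1 ∧ pq.1 < 2^(k+1) ∧ 2^(k-1) < pq.2 ∧ pq.2 < 2^(k+1) := by
      intro pq hpq
      rw [hF, Finset.mem_filter, hPairs, Finset.mem_filter, Finset.mem_product] at hpq
      obtain ⟨⟨⟨h1, h2⟩, hp1, hp2, hyp, hqltp, hplt2q⟩, hlog⟩ := hpq
      have hp0 : pq.1 ≠ 0 := hp1.pos.ne'
      have hplow : 2^k ≤ pq.1 := by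
        rw [← hlog]; exact Nat.pow_log_le_self 2 hp0
      have hphigh : pq.1 < 2^(k+1) := by
        rw [← hlog]; exact Nat.lt_pow_succ_log_self (by norm_num) _
      have h2k : (2:ℕ)^k = 2 * 2^(k-1) := by
        rw [← pow_succ']
        congr 1
        omega
      refine ⟨hplow, hphigh, by omega, by omega⟩
    have hFsub : F ⊆ A ×ˢ A := by
      intro pq hpq
      obtain ⟨hplow, hphigh, hqlow, hqhigh⟩ := hmem pq hpq
      rw [hF, Finset.mem_filter, hPairs, Finset.mem_filter, Finset.mem_product] at hpq
      obtain ⟨⟨⟨h1, h2⟩, hp1, hp2, -, -, -⟩, -⟩ := hpq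
      rw [Finset.mem_product, hA]
      constructor
      · rw [Finset.mem_filter, Finset.mem_Ioc]
        have : (2:ℕ)^(k-1) < 2^k := Nat.pow_lt_pow_right (by norm_num) (by omega)
        exact ⟨⟨by omega, by omega⟩, hp1⟩
      · rw [Finset.mem_filter, Finset.mem_Ioc]
        exact ⟨⟨hqlow, by omega⟩, hp2⟩
    -- cardinality of A
    have hcardA : (A.card : ℝ) ≤ 2^(k+3) / (k:ℝ) := by
      have hch : A.card * (k-1) ≤ 2^(k+2) := my_cheb k hk2
      have hcast : (A.card : ℝ) * ((k:ℝ) - 1) ≤ 2^(k+2) := by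
        have : ((A.card * (k-1) : ℕ) : ℝ) ≤ ((2^(k+2) : ℕ) : ℝ) := by exact_mod_cast hch
        push_cast [Nat.cast_sub (by omega : 1 ≤ k)] at this
        linarith
      have hkpos : (0:ℝ) < (k:ℝ) := by exact_mod_cast (by omega : 0 < k)
      have hk1pos : (0:ℝ) < (k:ℝ) - 1 := by
        have : (2:ℝ) ≤ (k:ℝ) := by exact_mod_cast hk2
        linarith
      rw [le_div_iff₀ hkpos]
      have h2 : (2:ℝ) * ((k:ℝ) - 1) ≥ (k:ℝ) := by
        have : (2:ℝ) ≤ (k:ℝ) := by exact_mod_cast hk2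
        linarith
      have hAnn : (0:ℝ) ≤ (A.card : ℝ) := Nat.cast_nonneg _
      have hpow : (2:ℝ)^(k+3) = 2 * 2^(k+2) := by ring
      nlinarith
    -- bound each term
    set t := (2:ℝ)^k with ht
    have htpos : (0:ℝ) < t := by positivity
    have hterm : ∀ pq ∈ F, x / ((pq.1 : ℝ) * (pq.2 : ℝ)) ≤ 2*x/t^2 := by
      intro pq hpq
      obtain ⟨hplow, -, hqlow, -⟩ := hmem pq hpq
      have hp : t ≤ (pq.1 : ℝ) := by
        rw [ht]; exact_mod_cast hplow
      have hq : t/2 ≤ (pq.2 : ℝ) := by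
        have h1 : ((2^(k-1) : ℕ) : ℝ) ≤ (pq.2 : ℝ) := by exact_mod_cast hqlow.le
        have h2k : (2:ℝ)^k = 2 * 2^(k-1) := by
          rw [← pow_succ']
          congr 1
          omega
        have h2 : ((2^(k-1) : ℕ) : ℝ) = t/2 := by
          rw [ht, h2k]
          push_cast
          ring
        linarith
      have hq0 : (0:ℝ) < (pq.2 : ℝ) := by linarith
      have hp0 : (0:ℝ) < (pq.1 : ℝ) := by linarith
      have hprod : t^2/2 ≤ (pq.1 : ℝ) * (pq.2 : ℝ) := by
        nlinarith [mul_le_mul hp hq (by linarith : (0:ℝ) ≤ t/2) (by linarith : (0:ℝ) ≤ (pq.1:ℝ))]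
      rw [div_le_div_iff₀ (mul_pos hp0 hq0) (by positivity)]
      nlinarith [mul_le_mul_of_nonneg_left hprod hx0.le]
    calc ∑ pq ∈ F, x / ((pq.1 : ℝ) * (pq.2 : ℝ))
        ≤ ∑ pq ∈ F, 2*x/t^2 := Finset.sum_le_sum hterm
      _ = (F.card : ℝ) * (2*x/t^2) := by rw [Finset.sum_const, nsmul_eq_mul]
      _ ≤ ((A.card : ℝ) * (A.card : ℝ)) * (2*x/t^2) := by
          have hle : F.card ≤ A.card * A.card := by
            calc F.card ≤ (A ×ˢ A).card := Finset.card_le_card hFsub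
              _ = A.card * A.card := Finset.card_product A A
          have : (F.card : ℝ) ≤ (A.card : ℝ) * (A.card : ℝ) := by exact_mod_cast hle
          have hb : (0:ℝ) ≤ 2*x/t^2 := by positivity
          exact mul_le_mul_of_nonneg_right this hb
      _ ≤ (2^(k+3) / (k:ℝ)) * (2^(k+3) / (k:ℝ)) * (2*x/t^2) := by
          have hAnn : (0:ℝ) ≤ (A.card : ℝ) := Nat.cast_nonneg _
          have hb : (0:ℝ) ≤ 2*x/t^2 := by positivity
          have h1 : (A.card : ℝ) * (A.card : ℝ) ≤ (2^(k+3) / (k:ℝ)) * (2^(k+3) / (k:ℝ)) := by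
            have hpos : (0:ℝ) ≤ 2^(k+3) / (k:ℝ) := by positivity
            exact mul_le_mul hcardA hcardA hAnn hpos
          exact mul_le_mul_of_nonneg_right h1 hb
      _ = 128 * x / (k:ℝ)^2 := by
          have hkne : (k:ℝ) ≠ 0 := by positivity
          have htne : t ≠ 0 := ne_of_gt htpos
          rw [ht]
          have : (2:ℝ)^(k+3) = 8 * 2^k := by ring
          rw [this]
          field_simp
          ring
  -- Step E: assemble
  have hsum2 : ∑ k ∈ Finset.Icc K L, (1:ℝ)/(k:ℝ)^2 ≤ 1/((K:ℝ)-1) := by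
    have hcast : ((K-1:ℕ):ℝ) = (K:ℝ)-1 := by
      push_cast [Nat.cast_sub (by omega : 1 ≤ K)]
      ring
    have := my_sum_inv_sq (K-1) (by omega) L
    rw [show (K-1)+1 = K by omega, hcast] at this
    exact this
  have hKinv : 1/((K:ℝ)-1) ≤ 4/Real.log y := by
    have hK1pos : (0:ℝ) < (K:ℝ)-1 := by linarith
    rw [div_le_div_iff₀ hK1pos (by linarith : (0:ℝ) < Real.log y)]
    linarith
  have hyinv : x * (4/Real.log y) = 4 * (x * log3 x / Real.log x) := by
    rw [hlogy]
    have hlxpos : (0:ℝ) < Real.log x := by linarith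
    field_simp
  calc (S.card : ℝ)
      ≤ ∑ pq ∈ Pairs, x / ((pq.1 : ℝ) * (pq.2 : ℝ)) := hcard1
    _ = ∑ k ∈ Finset.Icc K L, ∑ pq ∈ Pairs.filter (fun pq => Nat.log 2 pq.1 = k),
          x / ((pq.1 : ℝ) * (pq.2 : ℝ)) := hfib
    _ ≤ ∑ k ∈ Finset.Icc K L, 128 * x / (k:ℝ)^2 := Finset.sum_le_sum hfibbound
    _ = 128 * x * ∑ k ∈ Finset.Icc K L, (1:ℝ)/(k:ℝ)^2 := by
        rw [Finset.mul_sum]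
        apply Finset.sum_congr rfl
        intro k _
        ring
    _ ≤ 128 * x * (1/((K:ℝ)-1)) := by
        apply mul_le_mul_of_nonneg_left hsum2 (by positivity)
    _ ≤ 128 * x * (4/Real.log y) := by
        apply mul_le_mul_of_nonneg_left hKinv (by positivity)
    _ = 512 * (x * log3 x / Real.log x) := by
        rw [show (128:ℝ) * x * (4/Real.log y) = 128 * (x * (4/Real.log y)) by ring, hyinv]
        ring
end
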